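/- For all integers m, j, l, n ≥ 0, β_{m,j} · β_{m+l,n}^{↑j} = β_{l,n}^{↑(m+j)} · β_{m,j+n} in B_∞. -/

import Mathlib

/-!
Splitting the block braids, `β_{m+l,n} = β_{l,n}^{↑m} β_{m,n}` and
`β_{m,j+n} = β_{m,j} β_{m,n}^{↑j}`, the identity reduces to the fact that `β_{m,j}`, a word in
`σ_1, …, σ_{m+j-1}`, commutes with the image of `↑(m+j)`, which is generated by the `σ_K` with
`K > m + j`.
-/

namespace BraidPaper

/-- Relations of the infinite Artin braid group `B_∞`.  The generator with index `n : ℕ`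
represents the Artin generator `σ_{n+1}` (so generators are `σ_1, σ_2, …`). -/
def BraidRels : Set (FreeGroup ℕ) :=
  {r | (∃ i : ℕ, r = .of i * .of (i + 1) * .of i * (.of (i + 1) * .of i * .of (i + 1))⁻¹) ∨
       (∃ i j : ℕ, i + 2 ≤ j ∧ r = .of i * .of j * (.of j * .of i)⁻¹)}

/-- The infinite Artin braid group `B_∞`, presented by generators `σ_1, σ_2, …` and the
braid and far-commutativity relations. -/
abbrev BInf : Type := PresentedGroup BraidRels

/-- The Artin generator `σ i` of `B_∞` (meaningful for `i ≥ 1`). -/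
def σ (i : ℕ) : BInf := PresentedGroup.of (i - 1)

lemma rel_eq_one {r : FreeGroup ℕ} (hr : r ∈ BraidRels) : PresentedGroup.mk BraidRels r = 1 := by
  have : r ∈ Subgroup.normalClosure BraidRels := Subgroup.subset_normalClosure hr
  exact (QuotientGroup.eq_one_iff r).mpr this

lemma gen_braid (i : ℕ) :
    (PresentedGroup.of i : BInf) * .of (i + 1) * .of i = .of (i + 1) * .of i * .of (i + 1) := by
  have h := rel_eq_one (Or.inl ⟨i, rfl⟩)
  rw [map_mul, map_mul, map_mul, map_inv, map_mul, map_mul, mul_inv_eq_one] at h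
  exact h

lemma gen_comm {i j : ℕ} (hij : i + 2 ≤ j) :
    (PresentedGroup.of i : BInf) * .of j = .of j * .of i := by
  have h := rel_eq_one (Or.inr ⟨i, j, hij, rfl⟩)
  rw [map_mul, map_mul, map_inv, map_mul, mul_inv_eq_one] at h
  exact h

/-- The shift endomorphism `↑ℓ : B_∞ → B_∞`, `σ_i ↦ σ_{i+ℓ}`. -/
def shift (l : ℕ) : BInf →* BInf :=
  PresentedGroup.toGroup (f := fun n => (PresentedGroup.of (n + l) : BInf)) (by
    rintro r (⟨i, rfl⟩ | ⟨i, j, hij, rfl⟩) <;>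
      simp only [map_mul, map_inv, FreeGroup.lift_apply_of, mul_inv_eq_one]
    · have h1 : i + 1 + l = i + l + 1 := by omega
      rw [h1]; exact gen_braid (i + l)
    · exact gen_comm (by omega : (i + l) + 2 ≤ j + l))

/-- The ascending product `σ_i σ_{i+1} ⋯ σ_{i+l-1}` (of `l` factors). -/
def asc (i l : ℕ) : BInf := ((List.range l).map fun t => σ (i + t)).prod

/-- The descending product `σ_i σ_{i-1} ⋯ σ_{i-k+1}` (of `k` factors). -/
def desc (i k : ℕ) : BInf := ((List.range k).map fun t => σ (i - t)).prod

/-- The block transposition braid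
`β_{k,l} = (σ_k σ_{k+1} ⋯ σ_{k+l-1})(σ_{k-1} σ_k ⋯ σ_{k+l-2}) ⋯ (σ_1 σ_2 ⋯ σ_l)`,
with `β_{k,0} = β_{0,l} = 1`. -/
def β (k l : ℕ) : BInf := ((List.range k).map fun r => asc (k - r) l).prod

/-- The positive (Garside) lift `ω_a = β_{1,1} β_{2,1} ⋯ β_{a-1,1}` of the longest element of
the symmetric group `S_a`, with `ω_0 = ω_1 = 1`. -/
def ω (a : ℕ) : BInf := ((List.range (a - 1)).map fun t => β (t + 1) 1).prod

/-- The copy of the braid group `B_n` inside `B_∞`: the subgroup generated by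
`σ_1, …, σ_{n-1}`. -/
def BSub (n : ℕ) : Subgroup BInf := Subgroup.closure {g | ∃ i, 1 ≤ i ∧ i < n ∧ g = σ i}

lemma shift_of (a n : ℕ) : shift a (PresentedGroup.of n) = PresentedGroup.of (n + a) :=
  PresentedGroup.toGroup.of _

lemma shift_σ (a : ℕ) {i : ℕ} (hi : 1 ≤ i) : shift a (σ i) = σ (i + a) := by
  rw [σ, σ, shift_of, show i - 1 + a = i + a - 1 by omega]

lemma shift_shift (a b : ℕ) (x : BInf) : shift a (shift b x) = shift (b + a) x := by
  have : (shift a).comp (shift b) = shift (b + a) :=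
    PresentedGroup.ext fun n => by simp only [MonoidHom.comp_apply, shift_of, add_assoc]
  exact DFunLike.congr_fun this x

lemma σ_commute {i k : ℕ} (hi : 1 ≤ i) (hik : i + 2 ≤ k) : Commute (σ i) (σ k) :=
  gen_comm (by omega)

lemma commute_shift {g : BInf} {a : ℕ} (h : ∀ K, a < K → Commute g (σ K)) (x : BInf) :
    Commute g (shift a x) := by
  have : (MulAut.conj g).toMonoidHom.comp (shift a) = shift a :=
    PresentedGroup.ext fun n => by
      have hK := (h (n + a + 1) (by omega)).eq
      rw [σ, Nat.add_sub_cancel] at hK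
      simp [shift_of, hK]
  have hx := DFunLike.congr_fun this x
  simp only [MonoidHom.comp_apply, MulEquiv.coe_toMonoidHom, MulAut.conj_apply] at hx
  exact mul_inv_eq_iff_eq_mul.mp hx

lemma asc_add (i j n : ℕ) : asc i (j + n) = asc i j * asc (i + j) n := by
  simp only [asc, List.range_add, List.map_append, List.prod_append, List.map_map,
    Function.comp_def, add_assoc]

lemma shift_asc (a : ℕ) {i : ℕ} (hi : 1 ≤ i) (l : ℕ) : shift a (asc i l) = asc (i + a) l := by
  rw [asc, asc, map_list_prod, List.map_map]
  refine congrArg List.prod (List.map_congr_left fun t _ => ?_)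
  rw [Function.comp_apply, shift_σ a (by omega), Nat.add_right_comm]

lemma β_succ (k l : ℕ) : β (k + 1) l = asc (k + 1) l * β k l := by
  rw [β, β, List.range_succ_eq_map, List.map_cons, List.prod_cons, List.map_map]
  congr 2
  ext r
  simp

lemma asc_commute_σ {i l K : ℕ} (hi : 1 ≤ i) (hK : i + l < K) : Commute (asc i l) (σ K) :=
  Commute.list_prod_left _ _ fun x hx => by
    obtain ⟨t, ht, rfl⟩ := List.mem_map.mp hx
    exact σ_commute (by omega) (by simp at ht; omega)

lemma β_commute_σ {m j K : ℕ} (hK : m + j < K) : Commute (β m j) (σ K) :=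
  Commute.list_prod_left _ _ fun x hx => by
    obtain ⟨r, hr, rfl⟩ := List.mem_map.mp hx
    exact asc_commute_σ (by simp at hr; omega) (by simp at hr; omega)

lemma β_commute_shift {m j a : ℕ} (h : m + j ≤ a) (x : BInf) : Commute (β m j) (shift a x) :=
  commute_shift (fun _ hK => β_commute_σ (by omega)) x

lemma β_add_right (m j n : ℕ) : β m (j + n) = β m j * shift j (β m n) := by
  induction m with
  | zero => simp [β]
  | succ m ih =>
    have hcomm : Commute (β m j) (asc (m + 1 + j) n) := by
      rw [show m + 1 + j = 1 + (m + j) by omega, ← shift_asc _ le_rfl]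
      exact β_commute_shift le_rfl _
    rw [β_succ, β_succ, β_succ, asc_add, ih, map_mul, shift_asc j (by omega), mul_assoc,
      ← mul_assoc (asc _ n), ← hcomm.eq]
    simp only [mul_assoc]

lemma β_add_left (a b l : ℕ) : β (a + b) l = shift b (β a l) * β b l := by
  induction a with
  | zero => simp [β]
  | succ a ih =>
    rw [Nat.add_right_comm, β_succ, ih, β_succ, map_mul, shift_asc b (by omega), mul_assoc,
      Nat.add_right_comm]

/-- `β_{m,j} · β_{m+l,n}^{↑j} = β_{l,n}^{↑(m+j)} · β_{m,j+n}` in `B_∞`. -/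
theorem beta_exchange (m j l n : ℕ) :
    β m j * shift j (β (m + l) n) = shift (m + j) (β l n) * β m (j + n) := by
  calc β m j * shift j (β (m + l) n)
      = β m j * shift (m + j) (β l n) * shift j (β m n) := by
        rw [add_comm m l, β_add_left, map_mul, shift_shift, mul_assoc]
    _ = shift (m + j) (β l n) * (β m j * shift j (β m n)) := by
        rw [(β_commute_shift le_rfl _).eq, mul_assoc]
    _ = shift (m + j) (β l n) * β m (j + n) := by rw [β_add_right]

end BraidPaper
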